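/- Let H0 be a self-adjoint operator with H0 ≥ 1 and spectral projections Q^0_L = E([1,L]), let B be a symmetric operator with D(H0) ⊆ D(B) such that H = H0 + B is self-adjoint on D(H0), assume D = D^∞(H0) = D^∞(H), and define V_L^t := Q^0_L e^{iHt} Q^0_L. Then: (i) for every ψ ∈ D and every t, V_L^t ψ converges to ψ(t) := e^{iHt} ψ in the graph topology t_H (i.e. ‖H^n (V_L^t ψ − e^{iHt} ψ)‖ → 0 for every n) as L → ∞; (ii) V_L^t converges to e^{iHt} in the quasi-uniform topology τ_*^D; moreover, for every n ∈ ℕ∪{0}, the n-th time derivative (d^n/dt^n) V_L^t ψ converges in t_H to (d^n/dt^n) ψ(t). -/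

import Mathlib

/-!
On `D = D^∞(H₀) = D^∞(H)` the graph topologies `t_{H₀}` and `t_H` coincide: by the uniform
boundedness principle on the Fréchet space `D`, every `‖Hⁿ·‖` is bounded by finitely many
`‖H₀ᵏ·‖`, and conversely.  In `t_{H₀}` the spectral projections are harmless: `Q_L` commutes
with `H₀`, is a contraction, and `Q_L v → v`.  As `e^{iHt}` is an isometry commuting with `H`,
`V_L^t ψ - e^{iHt} ψ = Q_L e^{iHt} (Q_L ψ - ψ) + (Q_L - 1) e^{iHt} ψ → 0` in `t_H`, and time
derivatives only insert powers of `iH`.  For `τ_*` the spectral bounds `‖H₀ᵏ Q_L‖ ≤ Lᵏ`,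
`‖(1 - Q_L) x‖ ≤ L⁻¹ ‖H₀ x‖` and `‖(1 - Q_L) f(H₀)‖ = O(L^{-k-1})` give the rate `O(1/L)` for
`H₀ᵏ (V_L^t - e^{iHt}) f(H₀)`; the other seminorm is the same bound for the adjoint at `-t`.
-/

open scoped ComplexInnerProductSpace

namespace Paper

/-- An unbounded linear operator in a Hilbert space `𝓗`, encoded by a distinguished
domain together with a globally defined linear extension of its action. -/
structure Op (𝓗 : Type*) [NormedAddCommGroup 𝓗] [InnerProductSpace ℂ 𝓗] where
  dom : Submodule ℂ 𝓗
  op : 𝓗 →ₗ[ℂ] 𝓗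

variable {𝓗 : Type*} [NormedAddCommGroup 𝓗] [InnerProductSpace ℂ 𝓗]

namespace Op

/-- `T.pw k` is the `k`-th power `T^k` of `T`, as a function. -/
def pw (T : Op 𝓗) (k : ℕ) : 𝓗 → 𝓗 := (fun x => T.op x)^[k]

/-- The domain `D(Tⁿ)` of the `n`-th power of `T`. -/
def domPow (T : Op 𝓗) : ℕ → Set 𝓗
  | 0 => Set.univ
  | n + 1 => {x | x ∈ T.dom ∧ T.op x ∈ T.domPow n}

/-- The set of C^∞-vectors `D^∞(T) = ⋂ₙ D(Tⁿ)`. -/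
def Dinf (T : Op 𝓗) : Set 𝓗 := ⋂ n : ℕ, T.domPow n

/-- `T` is symmetric. -/
def Symmetric (T : Op 𝓗) : Prop :=
  ∀ x ∈ T.dom, ∀ y ∈ T.dom, ⟪T.op x, y⟫ = ⟪x, T.op y⟫

/-- Self-adjointness: densely defined, symmetric, and every vector in the domain of the
adjoint already belongs to the domain (on which the adjoint acts as the operator). -/
def IsSelfAdjoint (T : Op 𝓗) : Prop :=
  Dense (T.dom : Set 𝓗) ∧ T.Symmetric ∧
    ∀ y z : 𝓗, (∀ x ∈ T.dom, ⟪T.op x, y⟫ = ⟪x, z⟫) → y ∈ T.dom ∧ T.op y = z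

/-- `T ≥ 1`. -/
def GeOne (T : Op 𝓗) : Prop := ∀ x ∈ T.dom, ‖x‖ ^ 2 ≤ (⟪T.op x, x⟫).re

/-- The perturbed operator `T + B`, with domain `D(T)`. -/
def pert (T B : Op 𝓗) : Op 𝓗 := ⟨T.dom, T.op + B.op⟩

/-- The graph topology `t_T` on a subset `D`, generated by the seminorms `φ ↦ ‖Tⁿφ‖`,
i.e. the initial topology for the maps `φ ↦ Tⁿφ`. -/
def graphTopOn (T : Op 𝓗) (D : Set 𝓗) : TopologicalSpace D :=
  ⨅ n : ℕ, TopologicalSpace.induced (fun φ : D => T.pw n ↑φ) inferInstance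

end Op

/-- `D0` is a core for the `k`-th power of `T`. -/
def IsCorePow (T : Op 𝓗) (k : ℕ) (D0 : Set 𝓗) : Prop :=
  D0 ⊆ T.domPow k ∧ ∀ x ∈ T.domPow k, ∃ u : ℕ → 𝓗, (∀ n, u n ∈ D0) ∧
    Filter.Tendsto u Filter.atTop (nhds x) ∧
    Filter.Tendsto (fun n => T.pw k (u n)) Filter.atTop (nhds (T.pw k x))

/-- Membership in the O*-algebra `L†(D)`: `A` maps `D` into `D`, `D ⊆ D(A*)` and
`A* D ⊆ D` (witnessed by `Adag`). -/
def MemLdag (D : Set 𝓗) (A : 𝓗 →ₗ[ℂ] 𝓗) : Prop :=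
  (∀ x ∈ D, A x ∈ D) ∧
    ∃ Adag : 𝓗 →ₗ[ℂ] 𝓗, (∀ x ∈ D, Adag x ∈ D) ∧
      ∀ x ∈ D, ∀ y ∈ D, ⟪A x, y⟫ = ⟪x, Adag y⟫

/-- The operator norm of (the bounded extension of) `A`, computed on the unit ball of `D`. -/
noncomputable def opNormOn (D : Set 𝓗) (A : 𝓗 → 𝓗) : ℝ :=
  ⨆ φ : {ψ : 𝓗 // ψ ∈ D ∧ ‖ψ‖ ≤ 1}, ‖A ↑φ‖

/-- The class `F` of positive, bounded, continuous functions on `[0,∞)` which decrease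
faster than any inverse power of `x`. -/
def IsInF (f : ℝ → ℝ) : Prop :=
  Continuous f ∧ (∀ x : ℝ, 0 ≤ x → 0 < f x) ∧
    ∀ k : ℕ, ∃ M : ℝ, ∀ x : ℝ, 0 ≤ x → x ^ k * f x ≤ M

/-- The bounded measurable functional calculus of a self-adjoint operator `T` whose
spectrum is contained in `[a, ∞)`. -/
structure FnCalc (T : Op 𝓗) (a : ℝ) where
  Φ : (ℝ → ℝ) → (𝓗 →L[ℂ] 𝓗)
  Φ_one : Φ (fun _ => 1) = 1
  Φ_add : ∀ f g : ℝ → ℝ, Measurable f → Measurable g →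
    Φ (fun t => f t + g t) = Φ f + Φ g
  Φ_mul : ∀ f g : ℝ → ℝ, Measurable f → Measurable g →
    Φ (fun t => f t * g t) = (Φ f).comp (Φ g)
  Φ_symm : ∀ (f : ℝ → ℝ) (x y : 𝓗), ⟪Φ f x, y⟫ = ⟪x, Φ f y⟫
  Φ_norm : ∀ (f : ℝ → ℝ) (M : ℝ), (∀ t : ℝ, a ≤ t → |f t| ≤ M) →
    ∀ x : 𝓗, ‖Φ f x‖ ≤ M * ‖x‖
  Φ_supp : ∀ f : ℝ → ℝ, Measurable f → (∀ t : ℝ, a ≤ t → f t = 0) → Φ f = 0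
  Φ_pos : ∀ f : ℝ → ℝ, Measurable f → (∀ t : ℝ, a ≤ t → 0 ≤ f t) →
    ∀ x : 𝓗, 0 ≤ (⟪Φ f x, x⟫).re
  Φ_dom : ∀ f : ℝ → ℝ, Measurable f → (∃ M : ℝ, ∀ t : ℝ, a ≤ t → |t * f t| ≤ M) →
    ∀ x : 𝓗, Φ f x ∈ T.dom ∧ T.op (Φ f x) = Φ (fun t => t * f t) x
  Q_tendsto : ∀ x : 𝓗, Filter.Tendsto
    (fun L : ℝ => Φ (Set.indicator (Set.Icc a L) fun _ => (1 : ℝ)) x)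
    Filter.atTop (nhds x)

/-- The spectral projection `Q_L = E([a, L])` of `T`. -/
noncomputable def FnCalc.Q {T : Op 𝓗} {a : ℝ} (c : FnCalc T a) (L : ℝ) : 𝓗 →L[ℂ] 𝓗 :=
  c.Φ (Set.indicator (Set.Icc a L) fun _ => (1 : ℝ))

/-- The seminorm `A ↦ max{‖Tᵏ A f(T)‖, ‖f(T) A Tᵏ‖}` of the quasi-uniform topology
`τ_*` on `L†(D)`. -/
noncomputable def qseminorm {T : Op 𝓗} {a : ℝ} (c : FnCalc T a) (D : Set 𝓗)
    (f : ℝ → ℝ) (k : ℕ) (A : 𝓗 →ₗ[ℂ] 𝓗) : ℝ :=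
  max (opNormOn D fun φ => T.pw k (A (c.Φ f φ)))
      (opNormOn D fun φ => c.Φ f (A (T.pw k φ)))

/-- `i[A,T] = i(A T - T A)`, as a function. -/
noncomputable def commI (A T : 𝓗 → 𝓗) : 𝓗 → 𝓗 :=
  fun φ => Complex.I • (A (T φ) - T (A φ))

/-- Iterated commutators: `itComm A B j = [A, B]_j`, with `[A,B]_0 = B` and
`[A,B]_{j+1} = [A, [A,B]_j]`. -/
def itComm (A B : 𝓗 → 𝓗) : ℕ → (𝓗 → 𝓗)
  | 0 => B
  | j + 1 => fun φ => A (itComm A B j φ) - itComm A B j (A φ)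

variable {𝓗 : Type*} [NormedAddCommGroup 𝓗] [InnerProductSpace ℂ 𝓗] [CompleteSpace 𝓗]

section

variable {𝓗 : Type*} [NormedAddCommGroup 𝓗]

open Filter Topology

lemma tendsto_opNormOn_zero {D : Set 𝓗} {A : ℝ → 𝓗 → 𝓗} {C : ℝ} (hC : 0 ≤ C)
    (h : ∀ L, 0 < L → ∀ φ ∈ D, ‖A L φ‖ ≤ C / L * ‖φ‖) :
    Tendsto (fun L => opNormOn D (A L)) atTop (𝓝 0) := by
  have hCL : Tendsto (fun L : ℝ => C / L) atTop (𝓝 0) :=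
    tendsto_const_nhds.div_atTop tendsto_id
  refine squeeze_zero' (Eventually.of_forall fun L => Real.iSup_nonneg fun _ => norm_nonneg _)
    ?_ hCL
  filter_upwards [eventually_gt_atTop 0] with L hL
  refine Real.iSup_le (fun φ => (h L hL φ φ.2.1).trans ?_) (by positivity)
  exact mul_le_of_le_one_right (by positivity) φ.2.2

end

section

variable {𝓗 : Type*} [NormedAddCommGroup 𝓗] [InnerProductSpace ℂ 𝓗]

open Filter Topology Finset

lemma norm_le_of_dense_of_inner_le {A : Submodule ℂ 𝓗} (hA : Dense (A : Set 𝓗)) {v : 𝓗}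
    {M : ℝ} (h : ∀ ψ ∈ A, ‖ψ‖ ≤ 1 → ‖⟪ψ, v⟫‖ ≤ M) : ‖v‖ ≤ M := by
  have hM : 0 ≤ M := by simpa using h 0 A.zero_mem (by simp)
  have hA' : ∀ ψ ∈ A, ‖⟪ψ, v⟫‖ ≤ M * ‖ψ‖ := by
    intro ψ hψ
    rcases eq_or_ne ψ 0 with rfl | hψ0
    · simp
    have hn : 0 < ‖ψ‖ := norm_pos_iff.2 hψ0
    have := h (((‖ψ‖⁻¹ : ℝ) : ℂ) • ψ) (A.smul_mem _ hψ) (by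
      rw [norm_smul, Complex.norm_real, norm_inv, norm_norm, inv_mul_cancel₀ hn.ne'])
    rw [inner_smul_left, norm_mul, RCLike.norm_conj, Complex.norm_real, norm_inv, norm_norm,
      inv_mul_le_iff₀ hn] at this
    linarith
  have hall : ∀ ψ, ‖⟪ψ, v⟫‖ ≤ M * ‖ψ‖ := by
    have hcl : IsClosed {ψ : 𝓗 | ‖⟪ψ, v⟫‖ ≤ M * ‖ψ‖} := isClosed_le (by fun_prop) (by fun_prop)
    intro ψ
    exact hcl.closure_subset_iff.2 hA' (hA ψ)
  have hv := hall v
  rw [inner_self_eq_norm_sq_to_K, norm_pow, RCLike.norm_ofReal, abs_norm, sq] at hv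
  rcases (norm_nonneg v).eq_or_lt with h0 | hpos
  · rw [← h0]; exact hM
  · exact le_of_mul_le_mul_right hv hpos

lemma norm_le_of_inner_self_eq {v x w : 𝓗} {C : ℝ} (hC : 0 ≤ C) (h : ⟪v, v⟫ = ⟪x, w⟫)
    (hw : ‖w‖ ≤ C * ‖v‖) : ‖v‖ ≤ C * ‖x‖ := by
  have hsq : ‖v‖ * ‖v‖ ≤ C * ‖x‖ * ‖v‖ :=
    calc ‖v‖ * ‖v‖ = ‖⟪x, w⟫‖ := by
          rw [← h, inner_self_eq_norm_sq_to_K, norm_pow, RCLike.norm_ofReal, abs_norm, sq]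
      _ ≤ ‖x‖ * (C * ‖v‖) := (norm_inner_le_norm x w).trans (by gcongr)
      _ = C * ‖x‖ * ‖v‖ := by ring
  rcases (norm_nonneg v).eq_or_lt with h0 | hpos
  · rw [← h0]; positivity
  · exact le_of_mul_le_mul_right hsq hpos

namespace Op

variable {T : Op 𝓗} {x y : 𝓗}

lemma pw_eq_pow (T : Op 𝓗) (k : ℕ) : T.pw k = ⇑(T.op ^ k) := (Module.End.coe_pow T.op k).symm

lemma pw_succ_apply (T : Op 𝓗) (k : ℕ) (x : 𝓗) : T.pw (k + 1) x = T.pw k (T.op x) :=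
  Function.iterate_succ_apply _ _ _

lemma pw_succ_apply' (T : Op 𝓗) (k : ℕ) (x : 𝓗) : T.pw (k + 1) x = T.op (T.pw k x) :=
  Function.iterate_succ_apply' _ _ _

lemma pw_add_apply (T : Op 𝓗) (m n : ℕ) (x : 𝓗) : T.pw (m + n) x = T.pw m (T.pw n x) :=
  Function.iterate_add_apply _ _ _ _

lemma pw_add (T : Op 𝓗) (k : ℕ) (x y : 𝓗) : T.pw k (x + y) = T.pw k x + T.pw k y := by
  simp only [pw_eq_pow, map_add]

lemma pw_sub (T : Op 𝓗) (k : ℕ) (x y : 𝓗) : T.pw k (x - y) = T.pw k x - T.pw k y := by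
  simp only [pw_eq_pow, map_sub]

lemma pw_smul (T : Op 𝓗) (k : ℕ) (c : ℂ) (x : 𝓗) : T.pw k (c • x) = c • T.pw k x := by
  simp only [pw_eq_pow, map_smul]

lemma mem_domPow_iff {n : ℕ} : x ∈ T.domPow n ↔ ∀ k < n, T.pw k x ∈ T.dom := by
  induction n generalizing x with
  | zero => simp [domPow]
  | succ n ih =>
    simp only [domPow, Set.mem_ofPred_eq, ih, Nat.forall_lt_succ_left, pw_succ_apply]
    rfl

lemma mem_Dinf_iff : x ∈ T.Dinf ↔ ∀ k, T.pw k x ∈ T.dom := by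
  simp only [Dinf, Set.mem_iInter, mem_domPow_iff]
  exact ⟨fun h k => h (k + 1) k k.lt_succ_self, fun h _ k _ => h k⟩

lemma mem_dom_of_mem_Dinf (hx : x ∈ T.Dinf) : x ∈ T.dom := mem_Dinf_iff.1 hx 0

lemma pw_mem_Dinf (k : ℕ) (hx : x ∈ T.Dinf) : T.pw k x ∈ T.Dinf :=
  mem_Dinf_iff.2 fun j => by rw [← pw_add_apply]; exact mem_Dinf_iff.1 hx _

lemma op_mem_Dinf (hx : x ∈ T.Dinf) : T.op x ∈ T.Dinf := pw_mem_Dinf 1 hx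

def dinf (T : Op 𝓗) : Submodule ℂ 𝓗 where
  carrier := T.Dinf
  add_mem' hx hy := mem_Dinf_iff.2 fun k => by
    rw [pw_add]; exact T.dom.add_mem (mem_Dinf_iff.1 hx k) (mem_Dinf_iff.1 hy k)
  zero_mem' := mem_Dinf_iff.2 fun k => by rw [pw_eq_pow, map_zero]; exact T.dom.zero_mem
  smul_mem' c _ hx := mem_Dinf_iff.2 fun k => by
    rw [pw_smul]; exact T.dom.smul_mem c (mem_Dinf_iff.1 hx k)

lemma Symmetric.inner_pw (hT : T.Symmetric) (k : ℕ) (hx : x ∈ T.Dinf) (hy : y ∈ T.Dinf) :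
    ⟪T.pw k x, y⟫ = ⟪x, T.pw k y⟫ := by
  induction k generalizing x with
  | zero => rfl
  | succ k ih =>
    rw [pw_succ_apply, ih (op_mem_Dinf hx), pw_succ_apply']
    exact hT x (mem_dom_of_mem_Dinf hx) _ (mem_dom_of_mem_Dinf (pw_mem_Dinf k hy))

def graph (T : Op 𝓗) : Set (𝓗 × 𝓗) := {p | p.1 ∈ T.dom ∧ T.op p.1 = p.2}

lemma IsSelfAdjoint.symmetric (hT : T.IsSelfAdjoint) : T.Symmetric := hT.2.1

/-- `T.graph` is the graph of the adjoint of `T`. -/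
lemma IsSelfAdjoint.isClosed_graph (hT : T.IsSelfAdjoint) : IsClosed T.graph := by
  have : T.graph = ⋂ x ∈ T.dom, {p : 𝓗 × 𝓗 | ⟪T.op x, p.1⟫ = ⟪x, p.2⟫} := by
    ext p
    simp only [graph, Set.mem_ofPred_eq, Set.mem_iInter]
    refine ⟨?_, hT.2.2 p.1 p.2⟩
    rintro ⟨hp, hTp⟩ x hx
    rw [← hTp]
    exact hT.symmetric x hx p.1 hp
  rw [this]
  exact isClosed_biInter fun x _ => isClosed_eq (by fun_prop) (by fun_prop)

/-- `{(Tᵏφ)ₖ : φ ∈ D^∞(T)}`: as a subspace of `ℕ → 𝓗` it carries the graph topology `t_T`. -/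
def graphSeq (T : Op 𝓗) : Submodule ℂ (ℕ → 𝓗) where
  carrier := {x | ∀ k, (x k, x (k + 1)) ∈ T.graph}
  add_mem' hx hy k := ⟨T.dom.add_mem (hx k).1 (hy k).1, by
    simp only [Pi.add_apply, map_add, (hx k).2, (hy k).2]⟩
  zero_mem' k := ⟨T.dom.zero_mem, map_zero _⟩
  smul_mem' c _ hx k := ⟨T.dom.smul_mem c (hx k).1, by
    simp only [Pi.smul_apply, map_smul, (hx k).2]⟩

lemma pw_mem_graphSeq (hx : x ∈ T.Dinf) : (fun k => T.pw k x) ∈ T.graphSeq := fun k =>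
  ⟨mem_Dinf_iff.1 hx k, (pw_succ_apply' T k x).symm⟩

lemma eq_pw_of_mem_graphSeq {x : ℕ → 𝓗} (hx : x ∈ T.graphSeq) (k : ℕ) : x k = T.pw k (x 0) := by
  induction k with
  | zero => rfl
  | succ k ih => rw [pw_succ_apply', ← ih, (hx k).2]

lemma mem_Dinf_of_mem_graphSeq {x : ℕ → 𝓗} (hx : x ∈ T.graphSeq) : x 0 ∈ T.Dinf :=
  mem_Dinf_iff.2 fun k => eq_pw_of_mem_graphSeq hx k ▸ (hx k).1

lemma isClosed_graphSeq (hT : IsClosed T.graph) : IsClosed (T.graphSeq : Set (ℕ → 𝓗)) := by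
  have : (T.graphSeq : Set (ℕ → 𝓗)) = ⋂ k, (fun x : ℕ → 𝓗 => (x k, x (k + 1))) ⁻¹' T.graph := by
    ext x; simp only [Set.mem_iInter, Set.mem_preimage]; rfl
  rw [this]
  exact isClosed_iInter fun k => hT.preimage (by fun_prop)

/-- `t_S ≤ t_T` on `D^∞(T)`. -/
def GraphDominated (S T : Op 𝓗) : Prop :=
  ∀ n, ∃ C m, 0 ≤ C ∧ ∀ φ ∈ T.Dinf, ‖S.pw n φ‖ ≤ C * ∑ k ∈ range m, ‖T.pw k φ‖

/-- Convergence `x → y` in the graph topology `t_T`. -/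
def GraphTendsto {α : Type*} (T : Op 𝓗) (x : α → 𝓗) (l : Filter α) (y : 𝓗) : Prop :=
  ∀ k, Tendsto (fun i => ‖T.pw k (x i - y)‖) l (𝓝 0)

end Op

section Complete

variable [CompleteSpace 𝓗]

/-- The space of sequences `(Tᵏφ)ₖ` is Fréchet, hence barrelled, so the pointwise bounded family
of continuous seminorms `φ ↦ ‖⟪Sⁿψ, φ⟫‖`, `‖ψ‖ ≤ 1`, has a continuous supremum. -/
theorem Op.exists_norm_inner_pw_le_sum {S T : Op 𝓗} (hT : IsClosed T.graph) (hS : S.Symmetric)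
    (hST : S.Dinf = T.Dinf) (n : ℕ) :
    ∃ C m, 0 ≤ C ∧ ∀ φ ∈ T.Dinf, ∀ ψ ∈ T.Dinf, ‖ψ‖ ≤ 1 →
      ‖⟪S.pw n ψ, φ⟫‖ ≤ C * ∑ k ∈ range m, ‖T.pw k φ‖ := by
  have hD : ∀ {x}, x ∈ T.Dinf → x ∈ S.Dinf := fun h => hST ▸ h
  let E := T.graphSeq
  have : TopologicalSpace.IsCompletelyMetrizableSpace E :=
    (Op.isClosed_graphSeq hT).isCompletelyMetrizableSpace
  let ℓ : {ψ : 𝓗 // ψ ∈ T.Dinf ∧ ‖ψ‖ ≤ 1} → E →L[ℂ] ℂ := fun ψ =>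
    (innerSL ℂ (S.pw n ψ)).comp ((ContinuousLinearMap.proj 0).comp E.subtypeL)
  let p := fun ψ => (normSeminorm ℂ ℂ).comp (ℓ ψ).toLinearMap
  have hbdd : BddAbove (Set.range p) := by
    refine Seminorm.bddAbove_range_iff.2 fun x => ⟨‖S.pw n ((x : ℕ → 𝓗) 0)‖, ?_⟩
    rintro _ ⟨ψ, rfl⟩
    change ‖⟪S.pw n ψ, (x : ℕ → 𝓗) 0⟫‖ ≤ _
    rw [hS.inner_pw n (hD ψ.2.1) (hD (Op.mem_Dinf_of_mem_graphSeq x.2))]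
    exact (norm_inner_le_norm _ _).trans (mul_le_of_le_one_left (norm_nonneg _) ψ.2.2)
  have hcont : Continuous ⇑(⨆ ψ, p ψ) := by
    rw [Seminorm.coe_iSup_eq hbdd]
    exact Seminorm.continuous_iSup p (fun ψ => continuous_norm.comp (ℓ ψ).continuous) hbdd
  have hE := E.subtype.withSeminorms_induced (withSeminorms_pi fun _ => norm_withSeminorms ℂ 𝓗)
  obtain ⟨s, C, -, hC⟩ := Seminorm.bound_of_continuous hE _ hcont
  refine ⟨C, s.sup Sigma.fst + 1, C.2, fun φ hφ ψ hψ hψ1 => ?_⟩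
  let x : E := ⟨fun k => T.pw k φ, Op.pw_mem_graphSeq hφ⟩
  calc ‖⟪S.pw n ψ, φ⟫‖ = p ⟨ψ, hψ, hψ1⟩ x := rfl
    _ ≤ (⨆ ψ, p ψ) x := by
        rw [Seminorm.iSup_apply hbdd]
        exact le_ciSup (Seminorm.bddAbove_range_iff.1 hbdd x) _
    _ ≤ C * ∑ k ∈ range (s.sup Sigma.fst + 1), ‖T.pw k φ‖ := by
        refine (hC x).trans ?_
        rw [smul_apply, NNReal.smul_def, smul_eq_mul]
        refine mul_le_mul_of_nonneg_left (Seminorm.finset_sup_apply_le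
          (sum_nonneg fun _ _ => norm_nonneg _) fun i hi => ?_) C.2
        exact single_le_sum (f := fun k => ‖T.pw k φ‖) (fun _ _ => norm_nonneg _)
          (mem_range.2 (Nat.lt_succ_of_le (le_sup (f := Sigma.fst) hi)))

theorem Op.graphDominated_of_isClosed {S T : Op 𝓗} (hT : IsClosed T.graph) (hS : S.Symmetric)
    (hST : S.Dinf = T.Dinf) (hdense : Dense T.Dinf) : S.GraphDominated T := by
  intro n
  obtain ⟨C, m, hC, hbound⟩ := Op.exists_norm_inner_pw_le_sum hT hS hST n
  refine ⟨C, m, hC, fun φ hφ => norm_le_of_dense_of_inner_le (A := T.dinf) hdense ?_⟩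
  intro ψ hψ hψ1
  rw [← hS.inner_pw n (hST ▸ hψ) (hST ▸ hφ)]
  exact hbound φ hφ ψ hψ hψ1

end Complete

namespace Op

variable {S T : Op 𝓗} {α : Type*} {l : Filter α} {x x' : α → 𝓗} {y y' : 𝓗}

lemma GraphDominated.graphTendsto (h : S.GraphDominated T) (hx : ∀ i, x i ∈ T.Dinf)
    (hy : y ∈ T.Dinf) (hT : T.GraphTendsto x l y) : S.GraphTendsto x l y := by
  intro n
  obtain ⟨C, m, -, hbound⟩ := h n
  have hsum : Tendsto (fun i => C * ∑ k ∈ range m, ‖T.pw k (x i - y)‖) l (𝓝 0) := by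
    simpa using (tendsto_finsetSum _ fun k _ => hT k).const_mul C
  exact squeeze_zero (fun _ => norm_nonneg _) (fun i => hbound _ (T.dinf.sub_mem (hx i) hy)) hsum

lemma GraphDominated.exists_bound {ι : Type*} {x : ι → 𝓗} {w : ι → ℝ}
    (h : S.GraphDominated T) (hx : ∀ i, x i ∈ T.Dinf)
    (hT : ∀ k, ∃ c, ∀ i, ‖T.pw k (x i)‖ ≤ c * w i) (n : ℕ) :
    ∃ c, ∀ i, ‖S.pw n (x i)‖ ≤ c * w i := by
  obtain ⟨C, m, hC, hbound⟩ := h n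
  choose c hc using hT
  refine ⟨C * ∑ k ∈ range m, c k, fun i => (hbound _ (hx i)).trans ?_⟩
  rw [mul_assoc, sum_mul]
  exact mul_le_mul_of_nonneg_left (sum_le_sum fun k _ => hc k i) hC

lemma GraphTendsto.add (hx : T.GraphTendsto x l y) (hx' : T.GraphTendsto x' l y') :
    T.GraphTendsto (fun i => x i + x' i) l (y + y') := by
  intro k
  refine squeeze_zero (fun _ => norm_nonneg _) (fun i => ?_) (by simpa using (hx k).add (hx' k))
  rw [add_sub_add_comm, pw_add]
  exact norm_add_le _ _

lemma GraphTendsto.sub_const (hx : T.GraphTendsto x l y) :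
    T.GraphTendsto (fun i => x i - y) l 0 := by
  simpa only [GraphTendsto, sub_zero] using hx

lemma GraphTendsto.const_smul (hx : T.GraphTendsto x l y) (c : ℂ) :
    T.GraphTendsto (fun i => c • x i) l (c • y) := fun k => by
  simpa only [← smul_sub, pw_smul, norm_smul, mul_zero] using (hx k).const_mul ‖c‖

lemma GraphTendsto.pw (hx : T.GraphTendsto x l y) (n : ℕ) :
    T.GraphTendsto (fun i => T.pw n (x i)) l (T.pw n y) := by
  intro k
  simpa only [← pw_sub, ← pw_add_apply] using hx (k + n)

end Op

def RapidDecay (a : ℝ) (f : ℝ → ℝ) : Prop := ∀ j : ℕ, ∃ M, ∀ t, a ≤ t → |t ^ j * f t| ≤ M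

lemma RapidDecay.pow_mul {a : ℝ} {f : ℝ → ℝ} (hf : RapidDecay a f) (k : ℕ) :
    RapidDecay a fun t => t ^ k * f t := fun j => by
  obtain ⟨M, hM⟩ := hf (j + k)
  exact ⟨M, fun t ht => by rw [← mul_assoc, ← pow_add]; exact hM t ht⟩

lemma RapidDecay.exists_bound_mul {a : ℝ} {f : ℝ → ℝ} (hf : RapidDecay a f) :
    ∃ M, ∀ t, a ≤ t → |t * f t| ≤ M := by
  simpa using hf 1

lemma rapidDecay_indicator_Icc (a L : ℝ) :
    RapidDecay a (Set.indicator (Set.Icc a L) fun _ => 1) := fun j => by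
  refine ⟨max |a| |L| ^ j, fun t _ => ?_⟩
  by_cases ht : t ∈ Set.Icc a L
  · rw [Set.indicator_of_mem ht, mul_one, abs_pow]
    exact pow_le_pow_left₀ (abs_nonneg t) (abs_le_max_abs_abs ht.1 ht.2) j
  · rw [Set.indicator_of_notMem ht, mul_zero, abs_zero]
    positivity

lemma IsInF.rapidDecay {a : ℝ} {f : ℝ → ℝ} (hf : IsInF f) (ha : 0 ≤ a) : RapidDecay a f :=
  fun j => by
  obtain ⟨M, hM⟩ := hf.2.2 j
  refine ⟨M, fun t ht => ?_⟩
  have ht0 : 0 ≤ t := ha.trans ht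
  rw [abs_of_nonneg (mul_nonneg (pow_nonneg ht0 j) (hf.2.1 t ht0).le)]
  exact hM t ht0

namespace FnCalc

variable {T : Op 𝓗} {a : ℝ} (c : FnCalc T a) {f g : ℝ → ℝ} {x : 𝓗}

lemma Φ_congr (hf : Measurable f) (hg : Measurable g) (h : ∀ t, a ≤ t → f t = g t) :
    c.Φ f = c.Φ g := by
  have hfg : c.Φ (fun t => f t - g t) = 0 :=
    c.Φ_supp _ (hf.sub hg) fun t ht => sub_eq_zero.2 (h t ht)
  have := c.Φ_add g (fun t => f t - g t) hg (hf.sub hg)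
  simp only [add_sub_cancel, hfg, add_zero] at this
  exact this

lemma pw_Φ_apply (hf : Measurable f) (hfd : RapidDecay a f) (k : ℕ) (x : 𝓗) :
    T.pw k (c.Φ f x) = c.Φ (fun t => t ^ k * f t) x := by
  induction k with
  | zero => simp [Op.pw]
  | succ k ih =>
    rw [Op.pw_succ_apply', ih,
      (c.Φ_dom _ (by fun_prop) (hfd.pow_mul k).exists_bound_mul x).2]
    simp only [← mul_assoc, ← pow_succ']

lemma Φ_mem_Dinf (hf : Measurable f) (hfd : RapidDecay a f) (x : 𝓗) : c.Φ f x ∈ T.Dinf :=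
  Op.mem_Dinf_iff.2 fun k => by
  rw [c.pw_Φ_apply hf hfd]
  exact (c.Φ_dom _ (by fun_prop) (hfd.pow_mul k).exists_bound_mul x).1

lemma exists_norm_pw_Φ_le (hf : Measurable f) (hfd : RapidDecay a f) (k : ℕ) :
    ∃ M, ∀ x, ‖T.pw k (c.Φ f x)‖ ≤ M * ‖x‖ := by
  obtain ⟨M, hM⟩ := hfd k
  exact ⟨M, fun x => by rw [c.pw_Φ_apply hf hfd]; exact c.Φ_norm _ M hM x⟩

lemma Φ_op_apply (hT : T.Symmetric) (hf : Measurable f)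
    (hb : ∃ M, ∀ t, a ≤ t → |t * f t| ≤ M) (hx : x ∈ T.dom) :
    c.Φ f (T.op x) = c.Φ (fun t => t * f t) x := by
  refine ext_inner_left ℂ fun y => ?_
  have hdom := c.Φ_dom f hf hb y
  rw [← c.Φ_symm, ← hT _ hdom.1 x hx, hdom.2, c.Φ_symm]

lemma Φ_pw_apply (hT : T.Symmetric) (hf : Measurable f) (hfd : RapidDecay a f) (k : ℕ)
    (hx : x ∈ T.Dinf) : c.Φ f (T.pw k x) = c.Φ (fun t => t ^ k * f t) x := by
  induction k generalizing x with
  | zero => simp [Op.pw]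
  | succ k ih =>
    rw [Op.pw_succ_apply, ih (Op.op_mem_Dinf hx), c.Φ_op_apply hT (by fun_prop)
      (hfd.pow_mul k).exists_bound_mul (Op.mem_dom_of_mem_Dinf hx)]
    simp only [← mul_assoc, ← pow_succ']

lemma Q_mem_Dinf (L : ℝ) (x : 𝓗) : c.Q L x ∈ T.Dinf :=
  c.Φ_mem_Dinf (measurable_const.indicator measurableSet_Icc) (rapidDecay_indicator_Icc a L) x

lemma pw_Q_apply (hT : T.Symmetric) (L : ℝ) (k : ℕ) (hx : x ∈ T.Dinf) :
    T.pw k (c.Q L x) = c.Q L (T.pw k x) := by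
  have hm : Measurable (Set.indicator (Set.Icc a L) fun _ => (1 : ℝ)) :=
    measurable_const.indicator measurableSet_Icc
  rw [FnCalc.Q, c.pw_Φ_apply hm (rapidDecay_indicator_Icc a L),
    c.Φ_pw_apply hT hm (rapidDecay_indicator_Icc a L) k hx]

lemma inner_Q_apply_left (L : ℝ) (x y : 𝓗) : ⟪c.Q L x, y⟫ = ⟪x, c.Q L y⟫ := c.Φ_symm _ x y

lemma norm_Q_apply_le (L : ℝ) (x : 𝓗) : ‖c.Q L x‖ ≤ ‖x‖ := by
  refine (c.Φ_norm _ 1 (fun t _ => ?_) x).trans_eq (one_mul _)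
  by_cases ht : t ∈ Set.Icc a L <;> simp [ht]

lemma norm_pw_Q_apply_le (ha : 0 ≤ a) {L : ℝ} (hL : 0 ≤ L) (k : ℕ) (x : 𝓗) :
    ‖T.pw k (c.Q L x)‖ ≤ L ^ k * ‖x‖ := by
  rw [FnCalc.Q, c.pw_Φ_apply (measurable_const.indicator measurableSet_Icc)
    (rapidDecay_indicator_Icc a L)]
  refine c.Φ_norm _ _ (fun t _ => ?_) x
  by_cases ht : t ∈ Set.Icc a L
  · rw [Set.indicator_of_mem ht, mul_one, abs_of_nonneg (pow_nonneg (ha.trans ht.1) k)]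
    exact pow_le_pow_left₀ (ha.trans ht.1) ht.2 k
  · rw [Set.indicator_of_notMem ht, mul_zero, abs_zero]
    positivity

lemma sub_Q_apply (L : ℝ) (x : 𝓗) :
    x - c.Q L x = c.Φ (Set.indicator (Set.Ioi L) fun _ => 1) x := by
  have hsum : c.Q L + c.Φ (Set.indicator (Set.Ioi L) fun _ => 1) = 1 := by
    rw [FnCalc.Q, ← c.Φ_add _ _ (measurable_const.indicator measurableSet_Icc)
      (measurable_const.indicator measurableSet_Ioi), ← c.Φ_one]
    refine c.Φ_congr ((measurable_const.indicator measurableSet_Icc).add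
      (measurable_const.indicator measurableSet_Ioi)) measurable_const fun t ht => ?_
    by_cases htL : t ≤ L
    · simp [ht, htL]
    · simp [ht, htL, lt_of_not_ge htL]
  rw [eq_sub_of_add_eq' hsum]
  simp

lemma norm_sub_Q_apply_le (hT : T.Symmetric) {L : ℝ} (hL : 0 < L) (hx : x ∈ T.dom) :
    ‖x - c.Q L x‖ ≤ L⁻¹ * ‖T.op x‖ := by
  let g : ℝ → ℝ := Set.indicator (Set.Ioi L) fun t => t⁻¹
  have hg : Measurable g := measurable_inv.indicator measurableSet_Ioi
  have htg : (fun t => t * g t) = Set.indicator (Set.Ioi L) fun _ => 1 := by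
    ext t
    by_cases ht : t ∈ Set.Ioi L
    · simp [g, ht, mul_inv_cancel₀ (hL.trans ht).ne']
    · simp [g, ht]
  have hb : ∃ M, ∀ t, a ≤ t → |t * g t| ≤ M := ⟨1, fun t _ => by
    rw [show t * g t = _ from congrFun htg t]
    by_cases ht : t ∈ Set.Ioi L <;> simp [ht]⟩
  rw [c.sub_Q_apply, ← htg, ← c.Φ_op_apply hT hg hb hx]
  refine c.Φ_norm _ _ (fun t _ => ?_) _
  by_cases ht : t ∈ Set.Ioi L
  · rw [show g t = t⁻¹ from Set.indicator_of_mem ht _, abs_of_pos (inv_pos.2 (hL.trans ht))]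
    exact inv_anti₀ hL (le_of_lt ht)
  · rw [show g t = 0 from Set.indicator_of_notMem ht _, abs_zero]
    positivity

lemma norm_Φ_sub_Q_le (hf : Measurable f) {k : ℕ} {M : ℝ} (hM : ∀ t, a ≤ t → |t ^ k * f t| ≤ M)
    {L : ℝ} (hL : 0 < L) (x : 𝓗) :
    ‖c.Φ f x - c.Q L (c.Φ f x)‖ ≤ M / L ^ k * ‖x‖ := by
  rw [c.sub_Q_apply, ← ContinuousLinearMap.comp_apply,
    ← c.Φ_mul _ _ (measurable_const.indicator measurableSet_Ioi) hf]
  refine c.Φ_norm _ _ (fun t ht => ?_) x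
  have hM0 : 0 ≤ M := (abs_nonneg _).trans (hM t ht)
  by_cases htL : t ∈ Set.Ioi L
  · have htk : 0 < t ^ k := pow_pos (hL.trans htL) k
    rw [Set.indicator_of_mem htL, one_mul]
    calc |f t| = |t ^ k * f t| / t ^ k := by
          rw [abs_mul, abs_of_pos htk, mul_div_cancel_left₀ _ htk.ne']
      _ ≤ M / L ^ k := div_le_div₀ hM0 (hM t ht) (pow_pos hL k)
          (pow_le_pow_left₀ hL.le (le_of_lt htL) k)
  · rw [Set.indicator_of_notMem htL, zero_mul, abs_zero]
    positivity

lemma dense_Dinf (c : FnCalc T a) : Dense T.Dinf := fun x =>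
  mem_closure_of_tendsto (c.Q_tendsto x) (Eventually.of_forall fun L => c.Q_mem_Dinf L x)

lemma graphTendsto_Q (hT : T.Symmetric) {v : 𝓗} (hv : v ∈ T.Dinf) :
    T.GraphTendsto (fun L => c.Q L v) atTop v := fun k => by
  simp_rw [Op.pw_sub, c.pw_Q_apply hT _ k hv, ← dist_eq_norm]
  exact tendsto_iff_dist_tendsto_zero.1 (c.Q_tendsto _)

lemma graphTendsto_Q_apply_zero (hT : T.Symmetric) {l : Filter ℝ} {x : ℝ → 𝓗}
    (hx : ∀ L, x L ∈ T.Dinf) (h : T.GraphTendsto x l 0) :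
    T.GraphTendsto (fun L => c.Q L (x L)) l 0 := fun k => by
  refine squeeze_zero (fun _ => norm_nonneg _) (fun L => ?_) (h k)
  simp only [sub_zero, c.pw_Q_apply hT L k (hx L)]
  exact c.norm_Q_apply_le _ _

end FnCalc

lemma _root_.ContinuousLinearMap.hasDerivAt_comp_real {E F : Type*} [NormedAddCommGroup E]
    [NormedSpace ℂ E] [NormedAddCommGroup F] [NormedSpace ℂ F] (A : E →L[ℂ] F) {g : ℝ → E}
    {g' : E} {t : ℝ} (hg : HasDerivAt g g' t) : HasDerivAt (fun τ => A (g τ)) (A g') t :=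
  (A.restrictScalars ℝ).hasFDerivAt.comp_hasDerivAt t hg

/-- `U t = e^{iHt}`. -/
structure IsUnitaryGroupOf (H : Op 𝓗) (U : ℝ → 𝓗 →L[ℂ] 𝓗) : Prop where
  map_zero : U 0 = 1
  map_add : ∀ s t, U (s + t) = (U s).comp (U t)
  norm_map : ∀ t x, ‖U t x‖ = ‖x‖
  mapsTo_dom : ∀ t, ∀ x ∈ H.dom, U t x ∈ H.dom
  hasDerivAt : ∀ x ∈ H.dom, ∀ t, HasDerivAt (fun τ => U τ x) (Complex.I • H.op (U t x)) t

namespace IsUnitaryGroupOf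

variable {H : Op 𝓗} {U : ℝ → 𝓗 →L[ℂ] 𝓗} {x : 𝓗}

/-- Differentiate `s ↦ U (t + s) x = U t (U s x)` at `s = 0` in both forms. -/
lemma op_apply_comm (hU : IsUnitaryGroupOf H U) (hx : x ∈ H.dom) (t : ℝ) :
    H.op (U t x) = U t (H.op x) := by
  have h1 : HasDerivAt (fun s => U (t + s) x) (Complex.I • H.op (U t x)) 0 :=
    HasDerivAt.comp_const_add t 0 (by simpa using hU.hasDerivAt x hx t)
  have h2 : HasDerivAt (fun s => U (t + s) x) (U t (Complex.I • H.op x)) 0 := by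
    simp only [hU.map_add, ContinuousLinearMap.comp_apply]
    exact (U t).hasDerivAt_comp_real (by simpa [hU.map_zero] using hU.hasDerivAt x hx 0)
  rw [map_smul] at h2
  exact smul_right_injective 𝓗 Complex.I_ne_zero (h1.unique h2)

lemma pw_apply_comm (hU : IsUnitaryGroupOf H U) (hx : x ∈ H.Dinf) (k : ℕ) (t : ℝ) :
    H.pw k (U t x) = U t (H.pw k x) := by
  induction k with
  | zero => rfl
  | succ k ih =>
    rw [Op.pw_succ_apply', ih, hU.op_apply_comm (Op.mem_dom_of_mem_Dinf (Op.pw_mem_Dinf k hx)),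
      Op.pw_succ_apply']

lemma mem_Dinf (hU : IsUnitaryGroupOf H U) (hx : x ∈ H.Dinf) (t : ℝ) : U t x ∈ H.Dinf :=
  Op.mem_Dinf_iff.2 fun k => by
    rw [hU.pw_apply_comm hx]; exact hU.mapsTo_dom t _ (Op.mem_Dinf_iff.1 hx k)

lemma inner_apply_left (hU : IsUnitaryGroupOf H U) (t : ℝ) (x y : 𝓗) :
    ⟪U t x, y⟫ = ⟪x, U (-t) y⟫ := by
  have hy : U t (U (-t) y) = y := by
    rw [← ContinuousLinearMap.comp_apply, ← hU.map_add, add_neg_cancel, hU.map_zero]; rfl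
  conv_lhs => rw [← hy]
  exact LinearIsometry.inner_map_map (𝕜 := ℂ) ⟨(U t).toLinearMap, hU.norm_map t⟩ x _

lemma graphTendsto_apply (hU : IsUnitaryGroupOf H U) {α : Type*} {l : Filter α} {x : α → 𝓗}
    {y : 𝓗} (hx : ∀ i, x i ∈ H.Dinf) (hy : y ∈ H.Dinf) (h : H.GraphTendsto x l y) (t : ℝ) :
    H.GraphTendsto (fun i => U t (x i)) l (U t y) := fun k => by
  simpa only [← map_sub, hU.pw_apply_comm (H.dinf.sub_mem (hx _) hy), hU.norm_map] using h k

lemma iteratedDeriv_comp (hU : IsUnitaryGroupOf H U) (A : 𝓗 →L[ℂ] 𝓗) (n : ℕ)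
    (hx : x ∈ H.Dinf) :
    iteratedDeriv n (fun τ => A (U τ x)) = fun τ => A (U τ (Complex.I ^ n • H.pw n x)) := by
  induction n generalizing x with
  | zero => simp [Op.pw]
  | succ n ih =>
    have hderiv : deriv (fun τ => A (U τ x)) = fun τ => A (U τ (Complex.I • H.op x)) := by
      ext τ
      have h := hU.hasDerivAt x (Op.mem_dom_of_mem_Dinf hx) τ
      rw [hU.op_apply_comm (Op.mem_dom_of_mem_Dinf hx), ← map_smul] at h
      exact (A.hasDerivAt_comp_real h).deriv
    rw [iteratedDeriv_succ', hderiv, ih (H.dinf.smul_mem _ (Op.op_mem_Dinf hx)), Op.pw_smul,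
      smul_smul, ← pow_succ, ← Op.pw_succ_apply]

end IsUnitaryGroupOf

variable {H0 H : Op 𝓗} {a : ℝ} (c : FnCalc H0 a) {U : ℝ → 𝓗 →L[ℂ] 𝓗} {f : ℝ → ℝ}

lemma graphTendsto_Q_U_apply (h0 : H0.Symmetric) (hdom : H.GraphDominated H0)
    (hdom' : H0.GraphDominated H) (hD : H0.Dinf = H.Dinf) (hU : IsUnitaryGroupOf H U)
    {y : ℝ → 𝓗} {y₀ : 𝓗} (hy : ∀ L, y L ∈ H.Dinf) (hy₀ : y₀ ∈ H.Dinf)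
    (h : H.GraphTendsto y atTop y₀) (t : ℝ) :
    H.GraphTendsto (fun L => c.Q L (U t (y L))) atTop (U t y₀) := by
  have hUy : ∀ L, U t (y L) - U t y₀ ∈ H0.Dinf := fun L =>
    hD ▸ H.dinf.sub_mem (hU.mem_Dinf (hy L) t) (hU.mem_Dinf hy₀ t)
  have hw : H0.GraphTendsto (fun L => U t (y L) - U t y₀) atTop 0 :=
    hdom'.graphTendsto (fun L => hD ▸ hUy L) H.dinf.zero_mem
      (hU.graphTendsto_apply hy hy₀ h t).sub_const
  have h1 : H.GraphTendsto (fun L => c.Q L (U t (y L) - U t y₀)) atTop 0 :=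
    hdom.graphTendsto (fun L => c.Q_mem_Dinf L _) H0.dinf.zero_mem
      (c.graphTendsto_Q_apply_zero h0 hUy hw)
  have h2 : H.GraphTendsto (fun L => c.Q L (U t y₀)) atTop (U t y₀) :=
    hdom.graphTendsto (fun L => c.Q_mem_Dinf L _) (hD ▸ hU.mem_Dinf hy₀ t)
      (c.graphTendsto_Q h0 (hD ▸ hU.mem_Dinf hy₀ t))
  simpa using h1.add h2

lemma graphTendsto_iteratedDeriv (h0 : H0.Symmetric) (hdom : H.GraphDominated H0)
    (hdom' : H0.GraphDominated H) (hD : H0.Dinf = H.Dinf) (hU : IsUnitaryGroupOf H U)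
    {ψ : 𝓗} (hψ : ψ ∈ H.Dinf) (n : ℕ) (t : ℝ) :
    H.GraphTendsto (fun L => iteratedDeriv n (fun τ => c.Q L (U τ (c.Q L ψ))) t) atTop
      (iteratedDeriv n (fun τ => U τ ψ) t) := by
  have hQ : ∀ L, c.Q L ψ ∈ H.Dinf := fun L => hD ▸ c.Q_mem_Dinf L ψ
  have hderiv : iteratedDeriv n (fun τ => U τ ψ) t = U t (Complex.I ^ n • H.pw n ψ) := by
    simpa using congrFun (hU.iteratedDeriv_comp (ContinuousLinearMap.id ℂ 𝓗) n hψ) t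
  simp only [fun L => congrFun (hU.iteratedDeriv_comp (c.Q L) n (hQ L)) t, hderiv]
  refine graphTendsto_Q_U_apply c h0 hdom hdom' hD hU
    (fun L => H.dinf.smul_mem _ (Op.pw_mem_Dinf n (hQ L)))
    (H.dinf.smul_mem _ (Op.pw_mem_Dinf n hψ)) ?_ t
  exact ((hdom.graphTendsto (fun L => c.Q_mem_Dinf L ψ) (hD ▸ hψ)
    (c.graphTendsto_Q h0 (hD ▸ hψ))).pw n).const_smul _

lemma exists_norm_pw_U_Φ_le (hdom : H.GraphDominated H0) (hdom' : H0.GraphDominated H)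
    (hD : H0.Dinf = H.Dinf) (hU : IsUnitaryGroupOf H U) (hf : Measurable f)
    (hfd : RapidDecay a f) (t : ℝ) (r : ℕ) :
    ∃ C, ∀ ζ, ‖H0.pw r (U t (c.Φ f ζ))‖ ≤ C * ‖ζ‖ := by
  have hΦ : ∀ ζ, c.Φ f ζ ∈ H.Dinf := fun ζ => hD ▸ c.Φ_mem_Dinf hf hfd ζ
  have hH : ∀ j, ∃ C, ∀ ζ, ‖H.pw j (U t (c.Φ f ζ))‖ ≤ C * ‖ζ‖ := by
    simpa only [hU.pw_apply_comm (hΦ _), hU.norm_map] using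
      hdom.exists_bound (fun ζ => c.Φ_mem_Dinf hf hfd ζ) (c.exists_norm_pw_Φ_le hf hfd)
  exact hdom'.exists_bound (fun ζ => hU.mem_Dinf (hΦ ζ) t) hH r

lemma exists_norm_pw_Q_U_Q_Φ_sub_le (ha : 0 ≤ a) (h0 : H0.Symmetric)
    (hdom : H.GraphDominated H0) (hdom' : H0.GraphDominated H) (hD : H0.Dinf = H.Dinf)
    (hU : IsUnitaryGroupOf H U) (hf : Measurable f) (hfd : RapidDecay a f) (k : ℕ) (t : ℝ) :
    ∃ C, 0 ≤ C ∧ ∀ L, 0 < L → ∀ ζ,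
      ‖H0.pw k (c.Q L (U t (c.Q L (c.Φ f ζ))) - U t (c.Φ f ζ))‖ ≤ C / L * ‖ζ‖ := by
  obtain ⟨M, hM⟩ := hfd (k + 1)
  have hM0 : 0 ≤ M := (abs_nonneg _).trans (hM a le_rfl)
  obtain ⟨C, hC⟩ := exists_norm_pw_U_Φ_le c hdom hdom' hD hU hf hfd t (k + 1)
  refine ⟨M + max C 0, by positivity, fun L hL ζ => ?_⟩
  set w := c.Φ f ζ
  have hUw : U t w ∈ H0.Dinf := hD ▸ hU.mem_Dinf (hD ▸ c.Φ_mem_Dinf hf hfd ζ) t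
  have hsplit : c.Q L (U t (c.Q L w)) - U t w =
      c.Q L (U t (c.Q L w - w)) + (c.Q L (U t w) - U t w) := by
    simp only [map_sub]; abel
  have h1 : ‖H0.pw k (c.Q L (U t (c.Q L w - w)))‖ ≤ M / L * ‖ζ‖ :=
    calc _ ≤ L ^ k * ‖w - c.Q L w‖ :=
          (c.norm_pw_Q_apply_le ha hL.le k _).trans_eq (by rw [hU.norm_map, norm_sub_rev])
      _ ≤ L ^ k * (M / L ^ (k + 1) * ‖ζ‖) := by gcongr; exact c.norm_Φ_sub_Q_le hf hM hL ζ
      _ = M / L * ‖ζ‖ := by field_simp; ring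
  have h2 : ‖H0.pw k (c.Q L (U t w) - U t w)‖ ≤ max C 0 / L * ‖ζ‖ :=
    calc _ = ‖H0.pw k (U t w) - c.Q L (H0.pw k (U t w))‖ := by
          rw [Op.pw_sub, c.pw_Q_apply h0 L k hUw, norm_sub_rev]
      _ ≤ L⁻¹ * ‖H0.pw (k + 1) (U t w)‖ := by
          rw [Op.pw_succ_apply']
          exact c.norm_sub_Q_apply_le h0 hL (Op.mem_dom_of_mem_Dinf (Op.pw_mem_Dinf k hUw))
      _ ≤ L⁻¹ * (max C 0 * ‖ζ‖) := by
          gcongr; exact (hC ζ).trans (by gcongr; exact le_max_left _ _)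
      _ = max C 0 / L * ‖ζ‖ := by ring
  calc _ ≤ M / L * ‖ζ‖ + max C 0 / L * ‖ζ‖ := by
        rw [hsplit, Op.pw_add]; exact (norm_add_le _ _).trans (add_le_add h1 h2)
    _ = (M + max C 0) / L * ‖ζ‖ := by ring

/-- The adjoint of `Φ(f) (V_L^t - U t) H0ᵏ` is `H0ᵏ (V_L^{-t} - U (-t)) Φ(f)`. -/
lemma exists_norm_Φ_Q_U_Q_pw_sub_le (ha : 0 ≤ a) (h0 : H0.Symmetric)
    (hdom : H.GraphDominated H0) (hdom' : H0.GraphDominated H) (hD : H0.Dinf = H.Dinf)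
    (hU : IsUnitaryGroupOf H U) (hf : Measurable f) (hfd : RapidDecay a f) (k : ℕ) (t : ℝ) :
    ∃ C, 0 ≤ C ∧ ∀ L, 0 < L → ∀ φ ∈ H0.Dinf,
      ‖c.Φ f (c.Q L (U t (c.Q L (H0.pw k φ))) - U t (H0.pw k φ))‖ ≤ C / L * ‖φ‖ := by
  obtain ⟨C, hC, hbound⟩ :=
    exists_norm_pw_Q_U_Q_Φ_sub_le c ha h0 hdom hdom' hD hU hf hfd k (-t)
  refine ⟨C, hC, fun L hL φ hφ => norm_le_of_inner_self_eq (by positivity) ?_ (hbound L hL _)⟩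
  set v := c.Φ f (c.Q L (U t (c.Q L (H0.pw k φ))) - U t (H0.pw k φ))
  have hUΦ : U (-t) (c.Φ f v) ∈ H0.Dinf := hD ▸ hU.mem_Dinf (hD ▸ c.Φ_mem_Dinf hf hfd v) (-t)
  have hw : c.Q L (U (-t) (c.Q L (c.Φ f v))) - U (-t) (c.Φ f v) ∈ H0.Dinf :=
    H0.dinf.sub_mem (c.Q_mem_Dinf L _) hUΦ
  rw [← h0.inner_pw k hφ hw]
  conv_lhs => rw [c.Φ_symm]
  rw [inner_sub_left, inner_sub_right, c.inner_Q_apply_left, hU.inner_apply_left,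
    c.inner_Q_apply_left, hU.inner_apply_left]

end

theorem stmt18_general (H0 B : Op 𝓗) (hsa0 : H0.IsSelfAdjoint)
    (hsaH : (H0.pert B).IsSelfAdjoint)
    (S0 : FnCalc H0 1)
    (D : Set 𝓗) (hD0 : D = H0.Dinf) (hDH : D = (H0.pert B).Dinf)
    -- `U t = e^{iHt}`, the unitary group generated by `H`
    (U : ℝ → 𝓗 →L[ℂ] 𝓗)
    (hU0 : U 0 = 1) (hUadd : ∀ s t : ℝ, U (s + t) = (U s).comp (U t))
    (hUiso : ∀ (t : ℝ) (x : 𝓗), ‖U t x‖ = ‖x‖)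
    (hUdom : ∀ t : ℝ, ∀ x ∈ (H0.pert B).dom, U t x ∈ (H0.pert B).dom)
    (hUderiv : ∀ x ∈ (H0.pert B).dom, ∀ t : ℝ,
      HasDerivAt (fun τ : ℝ => U τ x) (Complex.I • (H0.pert B).op (U t x)) t) :
    -- (i) `t_H`-convergence of `V_L^t ψ` to `e^{iHt} ψ`
    (∀ ψ ∈ D, ∀ t : ℝ, ∀ n : ℕ,
      Filter.Tendsto (fun L : ℝ =>
          ‖(H0.pert B).pw n (S0.Q L (U t (S0.Q L ψ)) - U t ψ)‖)
        Filter.atTop (nhds 0)) ∧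
    -- (ii) `τ_*`-convergence of `V_L^t` to `e^{iHt}`
    (∀ f : ℝ → ℝ, IsInF f → ∀ k : ℕ, ∀ t : ℝ,
      Filter.Tendsto (fun L : ℝ => opNormOn D (fun φ =>
          H0.pw k (S0.Q L (U t (S0.Q L (S0.Φ f φ))) - U t (S0.Φ f φ))))
        Filter.atTop (nhds 0) ∧
      Filter.Tendsto (fun L : ℝ => opNormOn D (fun φ =>
          S0.Φ f (S0.Q L (U t (S0.Q L (H0.pw k φ))) - U t (H0.pw k φ))))
        Filter.atTop (nhds 0)) ∧
    -- (i') `t_H`-convergence of all time derivatives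
    (∀ ψ ∈ D, ∀ t : ℝ, ∀ n m : ℕ,
      Filter.Tendsto (fun L : ℝ =>
          ‖(H0.pert B).pw m
            (iteratedDeriv n (fun τ : ℝ => S0.Q L (U τ (S0.Q L ψ))) t
              - iteratedDeriv n (fun τ : ℝ => U τ ψ) t)‖)
        Filter.atTop (nhds 0)) := by
  subst hD0
  have hU : IsUnitaryGroupOf (H0.pert B) U := ⟨hU0, hUadd, hUiso, hUdom, hUderiv⟩
  have hdom : (H0.pert B).GraphDominated H0 := Op.graphDominated_of_isClosed
    hsa0.isClosed_graph hsaH.symmetric hDH.symm S0.dense_Dinf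
  have hdom' : H0.GraphDominated (H0.pert B) := Op.graphDominated_of_isClosed
    hsaH.isClosed_graph hsa0.symmetric hDH (hDH ▸ S0.dense_Dinf)
  have hderiv := fun ψ (hψ : ψ ∈ H0.Dinf) n t =>
    graphTendsto_iteratedDeriv S0 hsa0.symmetric hdom hdom' hDH hU (hDH ▸ hψ) n t
  refine ⟨fun ψ hψ t m => by simpa using hderiv ψ hψ 0 t m, fun f hf k t => ?_,
    fun ψ hψ t n m => hderiv ψ hψ n t m⟩
  have hfd := hf.rapidDecay zero_le_one
  obtain ⟨C₁, hC₁, h₁⟩ := exists_norm_pw_Q_U_Q_Φ_sub_le S0 zero_le_one hsa0.symmetric hdom hdom' hDH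
    hU hf.1.measurable hfd k t
  obtain ⟨C₂, hC₂, h₂⟩ := exists_norm_Φ_Q_U_Q_pw_sub_le S0 zero_le_one hsa0.symmetric hdom hdom' hDH
    hU hf.1.measurable hfd k t
  exact ⟨tendsto_opNormOn_zero hC₁ fun L hL φ _ => h₁ L hL φ, tendsto_opNormOn_zero hC₂ h₂⟩

/-- (Proposition 49.1, parts (i), (ii), (i')) With
`V_L^t = Q⁰_L e^{iHt} Q⁰_L`: (i) for every `ψ ∈ D`, `V_L^t ψ → e^{iHt} ψ` in the graph
topology `t_H` (every seminorm `‖Hⁿ·‖` of the difference tends to `0`); (ii)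
`V_L^t → e^{iHt}` in the quasi-uniform topology `τ_*`; and (i') all time derivatives
`(d/dt)ⁿ V_L^t ψ` converge in `t_H` to `(d/dt)ⁿ e^{iHt} ψ`. -/
theorem stmt18 (H0 B : Op 𝓗) (hsa0 : H0.IsSelfAdjoint) (hge : H0.GeOne)
    (hBsymm : B.Symmetric) (hdomB : (H0.dom : Set 𝓗) ⊆ B.dom)
    (hsaH : (H0.pert B).IsSelfAdjoint)
    (S0 : FnCalc H0 1)
    (D : Set 𝓗) (hD0 : D = H0.Dinf) (hDH : D = (H0.pert B).Dinf)
    -- `U t = e^{iHt}`, the unitary group generated by `H`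
    (U : ℝ → 𝓗 →L[ℂ] 𝓗)
    (hU0 : U 0 = 1) (hUadd : ∀ s t : ℝ, U (s + t) = (U s).comp (U t))
    (hUiso : ∀ (t : ℝ) (x : 𝓗), ‖U t x‖ = ‖x‖)
    (hUdom : ∀ t : ℝ, ∀ x ∈ (H0.pert B).dom, U t x ∈ (H0.pert B).dom)
    (hUderiv : ∀ x ∈ (H0.pert B).dom, ∀ t : ℝ,
      HasDerivAt (fun τ : ℝ => U τ x) (Complex.I • (H0.pert B).op (U t x)) t) :
    -- (i) `t_H`-convergence of `V_L^t ψ` to `e^{iHt} ψ`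
    (∀ ψ ∈ D, ∀ t : ℝ, ∀ n : ℕ,
      Filter.Tendsto (fun L : ℝ =>
          ‖(H0.pert B).pw n (S0.Q L (U t (S0.Q L ψ)) - U t ψ)‖)
        Filter.atTop (nhds 0)) ∧
    -- (ii) `τ_*`-convergence of `V_L^t` to `e^{iHt}`
    (∀ f : ℝ → ℝ, IsInF f → ∀ k : ℕ, ∀ t : ℝ,
      Filter.Tendsto (fun L : ℝ => opNormOn D (fun φ =>
          H0.pw k (S0.Q L (U t (S0.Q L (S0.Φ f φ))) - U t (S0.Φ f φ))))
        Filter.atTop (nhds 0) ∧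
      Filter.Tendsto (fun L : ℝ => opNormOn D (fun φ =>
          S0.Φ f (S0.Q L (U t (S0.Q L (H0.pw k φ))) - U t (H0.pw k φ))))
        Filter.atTop (nhds 0)) ∧
    -- (i') `t_H`-convergence of all time derivatives
    (∀ ψ ∈ D, ∀ t : ℝ, ∀ n m : ℕ,
      Filter.Tendsto (fun L : ℝ =>
          ‖(H0.pert B).pw m
            (iteratedDeriv n (fun τ : ℝ => S0.Q L (U τ (S0.Q L ψ))) t
              - iteratedDeriv n (fun τ : ℝ => U τ ψ) t)‖)
        Filter.atTop (nhds 0)) :=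
  stmt18_general H0 B hsa0 hsaH S0 D hD0 hDH U hU0 hUadd hUiso hUdom hUderiv

end Paper
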